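/- Let p be prime, and suppose F_{p^m} has a basis {e₁,...,e_m} over F_p and trace function tr with tr(e_t e_s) = δ_{ts}. Let C ⊆ F_{p^m}^n be a linear code with Euclidean dual C^⊥, and 𝒞 = C × C^⊥ ⊆ F_{p^m}^{2n}. Then the Construction A lattice Λ(𝒞) ⊆ R^{2nm}, with bilinear form given by the off-diagonal Lorentzian metric tensored with the identity, is even and self-dual. -/

import Mathlib

/-!
Expanding coordinates in the trace-orthonormal basis `e` is an `F_p`-linear isomorphism
`F_{p^m}^n ≃ F_p^{nm}` carrying the dot product to the trace of the dot product. Since `C` is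
`F_{p^m}`-linear and the trace form is nondegenerate, the images of `C` and `C^⊥` are mutual
dot-product orthogonals over `F_p`. For Construction A lattices over mutually orthogonal codes
the pairing of `U / √p` and `V / √p` is `(U ⬝ᵥ V) / p ∈ ℤ`; this gives `Λ ⊆ Λ*` and evenness,
as `b(λ, λ) = 2 ⟨λ₁, λ₂⟩`. Conversely, pairing `y ∈ Λ*` with the vectors `√p eᵢ ∈ Λ` shows that
`√p y` is integral, and pairing it with lifts of codewords puts its reduction mod `p` in the
orthogonal code, so `Λ* ⊆ Λ`.
-/

open scoped BigOperators

noncomputable section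

/-- Euclidean dual of a linear code over `F_{p^m}`. -/
def euclDualF (p m n : ℕ) [Fact p.Prime]
    (C : Submodule (GaloisField p m) (Fin n → GaloisField p m)) :
    Set (Fin n → GaloisField p m) :=
  { b | ∀ a ∈ C, ∑ i, a i * b i = 0 }

/-- Construction A lattice of the CSS code `C × C^⊥` over `F_{p^m}`: expand codeword
coordinates in the basis `e`, lift the `F_p`-coefficients to integers, scale by `1/√p`. -/
def cssLatticeF (p m n : ℕ) [Fact p.Prime]
    (e : Module.Basis (Fin m) (ZMod p) (GaloisField p m))
    (C : Submodule (GaloisField p m) (Fin n → GaloisField p m)) :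
    Set ((Fin n × Fin m → ℝ) × (Fin n × Fin m → ℝ)) :=
  { x | ∃ a ∈ C, ∃ b ∈ euclDualF p m n C, ∃ l₁ l₂ : Fin n × Fin m → ℤ,
      (∀ it : Fin n × Fin m,
        x.1 it = (((e.repr (a it.1) it.2).val : ℝ) + p * l₁ it) / Real.sqrt p) ∧
      (∀ it : Fin n × Fin m,
        x.2 it = (((e.repr (b it.1) it.2).val : ℝ) + p * l₂ it) / Real.sqrt p) }

/-- Off-diagonal Lorentzian form tensored with the identity on `ℝ^{nm} × ℝ^{nm}`. -/
def lorF {n m : ℕ} (x y : (Fin n × Fin m → ℝ) × (Fin n × Fin m → ℝ)) : ℝ :=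
  ∑ it : Fin n × Fin m, (x.1 it * y.2 it + y.1 it * x.2 it)

def dotOrthogonal {R ι : Type*} [CommSemiring R] [Fintype ι] (S : Set (ι → R)) : Set (ι → R) :=
  {v | ∀ u ∈ S, u ⬝ᵥ v = 0}

lemma zero_mem_dotOrthogonal {R ι : Type*} [CommSemiring R] [Fintype ι] (S : Set (ι → R)) :
    0 ∈ dotOrthogonal S :=
  fun u _ => dotProduct_zero u

section DotOrthogonal

variable {K κ : Type*} [Field K] [Fintype κ]

lemma coe_orthogonal_dotProductBilin (W : Submodule K (κ → K)) :
    (LinearMap.BilinForm.orthogonal (dotProductBilin K K) W : Set (κ → K)) =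
      dotOrthogonal W := by
  ext v
  simp [LinearMap.BilinForm.mem_orthogonal_iff, dotOrthogonal]

lemma dotOrthogonal_dotOrthogonal (W : Submodule K (κ → K)) :
    dotOrthogonal (dotOrthogonal (W : Set (κ → K))) = W := by
  have hrefl : (dotProductBilin K K : LinearMap.BilinForm K (κ → K)).IsRefl := fun u v h => by
    simpa [dotProduct_comm] using h
  have hnondeg : (dotProductBilin K K : LinearMap.BilinForm K (κ → K)).Nondegenerate :=
    hrefl.nondegenerate_iff_separatingLeft.mpr fun u hu => dotProduct_eq_zero u (by simpa using hu)
  rw [← coe_orthogonal_dotProductBilin, ← coe_orthogonal_dotProductBilin,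
    LinearMap.BilinForm.orthogonal_orthogonal hnondeg hrefl]

end DotOrthogonal

section TraceForm

variable {F K ι κ : Type*} [CommSemiring F] [CommSemiring K] [Algebra F K] [Fintype ι]
  {e : Module.Basis ι F K}

variable (e) in
def coordEquiv : (κ → K) ≃ₗ[F] (κ × ι → F) :=
  (LinearEquiv.piCongrRight fun _ => e.equivFun).trans (LinearEquiv.curry F F κ ι).symm

@[simp]
lemma coordEquiv_apply (a : κ → K) (it : κ × ι) : coordEquiv e a it = e.repr (a it.1) it.2 :=
  rfl

variable [DecidableEq ι] [Fintype κ] {tr : K →ₗ[F] F}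

lemma trace_mul_eq_sum_repr_mul (htr : ∀ t s, tr (e t * e s) = if t = s then 1 else 0)
    (c d : K) : tr (c * d) = ∑ t, e.repr c t * e.repr d t := by
  conv_lhs => rw [← e.sum_repr c, ← e.sum_repr d]
  rw [Finset.sum_mul_sum]
  simp only [smul_mul_smul_comm, map_sum, map_smul, smul_eq_mul, htr]
  simp [mul_comm]

lemma eq_zero_of_forall_trace_mul_eq_zero (htr : ∀ t s, tr (e t * e s) = if t = s then 1 else 0)
    {s : K} (hs : ∀ c, tr (c * s) = 0) : s = 0 := by
  refine e.repr.injective (Finsupp.ext fun t => ?_)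
  simpa [trace_mul_eq_sum_repr_mul htr, Finsupp.single_apply] using hs (e t)

lemma coordEquiv_dotProduct (htr : ∀ t s, tr (e t * e s) = if t = s then 1 else 0)
    (a b : κ → K) : coordEquiv e a ⬝ᵥ coordEquiv e b = tr (a ⬝ᵥ b) := by
  simp [dotProduct, Fintype.sum_prod_type, trace_mul_eq_sum_repr_mul htr]

lemma dotOrthogonal_image_coordEquiv (htr : ∀ t s, tr (e t * e s) = if t = s then 1 else 0)
    (W : Submodule K (κ → K)) :
    dotOrthogonal (coordEquiv e '' W) = coordEquiv e '' dotOrthogonal (W : Set (κ → K)) := by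
  ext v
  obtain ⟨b, rfl⟩ := (coordEquiv e).surjective v
  simp only [dotOrthogonal, Set.mem_ofPred_eq, Set.forall_mem_image,
    (coordEquiv e).injective.mem_set_image, coordEquiv_dotProduct htr]
  refine ⟨fun h a ha => eq_zero_of_forall_trace_mul_eq_zero htr fun c => ?_,
    fun h a ha => by rw [h a ha, map_zero]⟩
  rw [← smul_eq_mul, ← smul_dotProduct]
  exact h (W.smul_mem c ha)

end TraceForm

section ConstructionA

variable {ι : Type*} {p : ℕ}

def constructionA (p : ℕ) (S : Set (ι → ZMod p)) : Set (ι → ℝ) :=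
  {x | ∃ U : ι → ℤ, (fun i => (U i : ZMod p)) ∈ S ∧ x = fun i => U i / √p}

lemma zero_mem_constructionA {S : Set (ι → ZMod p)} (hS : 0 ∈ S) : 0 ∈ constructionA p S :=
  ⟨0, by convert hS using 1; ext; simp, by ext; simp⟩

lemma mem_constructionA_iff [NeZero p] {S : Set (ι → ZMod p)} {x : ι → ℝ} :
    x ∈ constructionA p S ↔
      ∃ u ∈ S, ∃ l : ι → ℤ, ∀ i, x i = (((u i).val : ℝ) + p * l i) / √p := by
  constructor
  · rintro ⟨U, hU, rfl⟩
    refine ⟨_, hU, fun i => U i / p, fun i => ?_⟩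
    have hval : ((U i : ZMod p).val : ℤ) + p * (U i / p) = U i := by
      rw [ZMod.val_intCast, Int.emod_add_mul_ediv]
    exact congrArg (· / √p) (by exact_mod_cast hval.symm)
  · rintro ⟨u, hu, l, hx⟩
    refine ⟨fun i => (u i).val + p * l i, ?_, funext fun i => by rw [hx]; push_cast; rfl⟩
    convert hu using 1
    ext i
    simp

variable [Fintype ι]

lemma dotProduct_div_sqrt (U V : ι → ℤ) :
    ((fun i => U i / √p) ⬝ᵥ fun i => V i / √p) = (U ⬝ᵥ V : ℤ) / p := by
  simp only [dotProduct, div_mul_div_comm, Real.mul_self_sqrt (Nat.cast_nonneg p), Int.cast_sum,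
    Int.cast_mul, Finset.sum_div]

lemma intCast_dotProduct_eq_zero_iff (U V : ι → ℤ) :
    ((fun i => (U i : ZMod p)) ⬝ᵥ fun i => (V i : ZMod p)) = 0 ↔ (p : ℤ) ∣ U ⬝ᵥ V := by
  rw [← ZMod.intCast_zmod_eq_zero_iff_dvd, ← eq_intCast (Int.castRingHom (ZMod p)),
    RingHom.map_dotProduct]
  rfl

variable [NeZero p]

lemma exists_int_dotProduct_eq {S T : Set (ι → ZMod p)} (hST : T ⊆ dotOrthogonal S)
    {x y : ι → ℝ} (hx : x ∈ constructionA p S) (hy : y ∈ constructionA p T) :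
    ∃ z : ℤ, x ⬝ᵥ y = z := by
  obtain ⟨U, hU, rfl⟩ := hx
  obtain ⟨V, hV, rfl⟩ := hy
  obtain ⟨z, hz⟩ := (intCast_dotProduct_eq_zero_iff U V).mp (hST hV _ hU)
  refine ⟨z, ?_⟩
  rw [dotProduct_div_sqrt, hz]
  push_cast
  field_simp [NeZero.ne p]

lemma mem_constructionA_dotOrthogonal {S : Set (ι → ZMod p)} (hS : 0 ∈ S) {y : ι → ℝ}
    (hy : ∀ x ∈ constructionA p S, ∃ z : ℤ, x ⬝ᵥ y = z) :
    y ∈ constructionA p (dotOrthogonal S) := by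
  classical
  have hsqrt : √p ≠ 0 := by simp [NeZero.ne p]
  have hcoord : ∀ i, ∃ z : ℤ, y i = z / √p := by
    intro i
    have hsingle : Pi.single i √p ∈ constructionA p S := by
      refine ⟨Pi.single i p, ?_, funext fun j => ?_⟩
      · convert hS using 1
        ext j
        by_cases hj : j = i <;> simp [hj]
      · by_cases hj : j = i <;> simp [hj, Real.div_sqrt]
    obtain ⟨z, hz⟩ := hy _ hsingle
    rw [single_dotProduct] at hz
    exact ⟨z, by rw [eq_div_iff hsqrt, mul_comm, hz]⟩
  choose V hV using hcoord
  refine ⟨V, fun u hu => ?_, funext hV⟩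
  have hlift : (fun i => (((u i).val : ℤ) : ZMod p)) = u := by
    funext i
    simp
  obtain ⟨z, hz⟩ := hy _ ⟨fun i => ((u i).val : ℤ), by rwa [hlift], rfl⟩
  rw [funext hV, dotProduct_div_sqrt, div_eq_iff (by simp [NeZero.ne p])] at hz
  rw [← hlift, intCast_dotProduct_eq_zero_iff]
  exact ⟨z, by exact_mod_cast hz.trans (mul_comm _ _)⟩

end ConstructionA

section Lorentzian

variable {n m p : ℕ} [NeZero p] {S T : Set (Fin n × Fin m → ZMod p)}

lemma lorF_eq_dotProduct (x y : (Fin n × Fin m → ℝ) × (Fin n × Fin m → ℝ)) :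
    lorF x y = x.1 ⬝ᵥ y.2 + y.1 ⬝ᵥ x.2 :=
  Finset.sum_add_distrib

lemma exists_int_lorF_eq (hST : T ⊆ dotOrthogonal S) {x y}
    (hx : x ∈ constructionA p S ×ˢ constructionA p T)
    (hy : y ∈ constructionA p S ×ˢ constructionA p T) : ∃ z : ℤ, lorF x y = z := by
  obtain ⟨z₁, h₁⟩ := exists_int_dotProduct_eq hST hx.1 hy.2
  obtain ⟨z₂, h₂⟩ := exists_int_dotProduct_eq hST hy.1 hx.2
  exact ⟨z₁ + z₂, by rw [lorF_eq_dotProduct, h₁, h₂]; push_cast; rfl⟩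

lemma exists_int_lorF_self_eq_two_mul (hST : T ⊆ dotOrthogonal S) {x}
    (hx : x ∈ constructionA p S ×ˢ constructionA p T) : ∃ z : ℤ, lorF x x = 2 * z := by
  obtain ⟨z, hz⟩ := exists_int_dotProduct_eq hST hx.1 hx.2
  exact ⟨z, by rw [lorF_eq_dotProduct, hz]; ring⟩

lemma prod_constructionA_eq_dual (hS : S = dotOrthogonal T) (hT : T = dotOrthogonal S) :
    constructionA p S ×ˢ constructionA p T =
      {y | ∀ x ∈ constructionA p S ×ˢ constructionA p T, ∃ z : ℤ, lorF x y = z} := by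
  have hS₀ : (0 : Fin n × Fin m → ℝ) ∈ constructionA p S :=
    zero_mem_constructionA (hS ▸ zero_mem_dotOrthogonal T)
  have hT₀ : (0 : Fin n × Fin m → ℝ) ∈ constructionA p T :=
    zero_mem_constructionA (hT ▸ zero_mem_dotOrthogonal S)
  refine subset_antisymm (fun y hy x hx => exists_int_lorF_eq hT.le hx hy) fun y hy => ⟨?_, ?_⟩
  · rw [hS]
    refine mem_constructionA_dotOrthogonal (hT ▸ zero_mem_dotOrthogonal S) fun x hx => ?_
    obtain ⟨z, hz⟩ := hy (0, x) ⟨hS₀, hx⟩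
    exact ⟨z, by simpa [lorF_eq_dotProduct, dotProduct_comm] using hz⟩
  · rw [hT]
    refine mem_constructionA_dotOrthogonal (hS ▸ zero_mem_dotOrthogonal T) fun x hx => ?_
    obtain ⟨z, hz⟩ := hy (x, 0) ⟨hx, hT₀⟩
    exact ⟨z, by simpa [lorF_eq_dotProduct] using hz⟩

end Lorentzian

lemma cssLatticeF_eq_prod (p m n : ℕ) [Fact p.Prime]
    (e : Module.Basis (Fin m) (ZMod p) (GaloisField p m))
    (C : Submodule (GaloisField p m) (Fin n → GaloisField p m)) :
    cssLatticeF p m n e C = constructionA p (coordEquiv e '' C) ×ˢ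
      constructionA p (coordEquiv e '' euclDualF p m n C) := by
  ext x
  simp only [cssLatticeF, Set.mem_prod, mem_constructionA_iff, Set.exists_mem_image,
    coordEquiv_apply, Set.mem_ofPred_eq]
  constructor
  · rintro ⟨a, ha, b, hb, l₁, l₂, h₁, h₂⟩
    exact ⟨⟨a, ha, l₁, h₁⟩, b, hb, l₂, h₂⟩
  · rintro ⟨⟨a, ha, l₁, h₁⟩, b, hb, l₂, h₂⟩
    exact ⟨a, ha, b, hb, l₁, l₂, h₁, h₂⟩

theorem cssLatticeF_even_self_dual (p m n : ℕ) [Fact p.Prime]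
    (e : Module.Basis (Fin m) (ZMod p) (GaloisField p m))
    (tr : GaloisField p m →ₗ[ZMod p] ZMod p)
    (htr : ∀ t s : Fin m, tr (e t * e s) = if t = s then 1 else 0)
    (C : Submodule (GaloisField p m) (Fin n → GaloisField p m)) :
    (∀ lam ∈ cssLatticeF p m n e C, ∃ z : ℤ, lorF lam lam = 2 * z) ∧
      cssLatticeF p m n e C =
        { y | ∀ x ∈ cssLatticeF p m n e C, ∃ z : ℤ, lorF x y = z } := by
  have hdual : coordEquiv e '' euclDualF p m n C = dotOrthogonal (coordEquiv e '' C) :=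
    (dotOrthogonal_image_coordEquiv htr C).symm
  have hbidual : coordEquiv e '' C = dotOrthogonal (coordEquiv e '' euclDualF p m n C) := by
    rw [show euclDualF p m n C = dotOrthogonal C from rfl, ← coe_orthogonal_dotProductBilin,
      dotOrthogonal_image_coordEquiv htr, coe_orthogonal_dotProductBilin,
      dotOrthogonal_dotOrthogonal]
  rw [cssLatticeF_eq_prod]
  exact ⟨fun _ => exists_int_lorF_self_eq_two_mul hdual.le, prod_constructionA_eq_dual hbidual hdual⟩

end
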